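/- Let λ > 0, set c := (2√3)⁻¹, and let a, b ∈ ℝ satisfy a > −2√(cλ) and b > −2√(cλ). Then the function (l, r, t) ↦ 1 − e^{−a·l − b·r − λ·t} is integrable with respect to the measure μ on (0,∞)³. -/

import Mathlib

/-!
Write `s = l + r`, `m = 2√(cλ)` and pick `κ ≥ 0` with `-a, -b ≤ κ < m`. Splitting
`1 - e^{-al-br-λt} = (1 - e^{-λt}) + e^{-λt} (1 - e^{-al-br})` bounds the integrand by
`min(1, λt) + (|a| + |b|) s e^{κs - λt}`. By AM–GM `λt + cs²/t ≥ ms`; applied to a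
`(1 - ε)`-fraction of `λt + cs²/t` it bounds `e^{κs - λt - cs²/t}` by `e^{-δs - εcs²/t}` with
`δ > 0`. The `t`-integrals are then Gamma integrals `∫ t^{-q-1} e^{-β/t} dt = Γ(q) β^{-q}`, which
bound the `t`-marginal by `min(α s^{-5/2}, β s^{-1/2}) + γ s^{-3/2} e^{-δs}`. Finally
`(l, r) ↦ l + r` pushes Lebesgue measure on the quadrant forward to `s ds`, and `s` times this
bound is integrable on `(0, ∞)`.
-/

open MeasureTheory Real Set
open scoped ENNReal

noncomputable def μ : Measure (ℝ × ℝ × ℝ) :=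
  (volume.restrict {p : ℝ × ℝ × ℝ | 0 < p.1 ∧ 0 < p.2.1 ∧ 0 < p.2.2}).withDensity
    fun p => ENNReal.ofReal
      ((3:ℝ) ^ (-(5:ℝ)/8) / (8 * Real.sqrt (2 * Real.pi)) * (p.1 + p.2.1) ^ ((1:ℝ)/2) *
        Real.exp (-(p.1 + p.2.1)^2 / (2 * Real.sqrt 3 * p.2.2)) * p.2.2 ^ (-(5:ℝ)/2))

theorem abs_one_sub_exp_neg_le_min {x : ℝ} (hx : 0 ≤ x) : |1 - exp (-x)| ≤ min 1 x := by
  rw [abs_of_nonneg (sub_nonneg.2 (exp_le_one_iff.2 (neg_nonpos.2 hx)))]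
  exact le_min (by linarith [exp_pos (-x)]) (by linarith [add_one_le_exp (-x)])

theorem abs_one_sub_exp_neg_le (y : ℝ) : |1 - exp (-y)| ≤ |y| * exp (max (-y) 0) := by
  rcases le_total 0 y with hy | hy
  · rw [max_eq_right (neg_nonpos.2 hy), exp_zero, mul_one, abs_of_nonneg hy]
    exact (abs_one_sub_exp_neg_le_min hy).trans (min_le_right _ _)
  · rw [max_eq_left (neg_nonneg.2 hy), abs_of_nonpos hy,
      abs_of_nonpos (sub_nonpos.2 (one_le_exp (neg_nonneg.2 hy)))]
    have h := mul_le_mul_of_nonneg_right (by linarith [add_one_le_exp y] : 1 - exp y ≤ -y)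
      (exp_pos (-y)).le
    rw [sub_mul, one_mul, ← exp_add, add_neg_cancel, exp_zero] at h
    linarith

theorem abs_one_sub_exp_neg_sub_le {a b κ lam l r t : ℝ} (hκ : 0 ≤ κ) (ha : -a ≤ κ)
    (hb : -b ≤ κ) (hl : 0 ≤ l) (hr : 0 ≤ r) (hlt : 0 ≤ lam * t) :
    |1 - exp (-a * l - b * r - lam * t)| ≤
      min 1 (lam * t) + (|a| + |b|) * (l + r) * exp (κ * (l + r) - lam * t) := by
  set y := a * l + b * r
  have hy : |y| ≤ (|a| + |b|) * (l + r) := by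
    calc |y| ≤ |a| * l + |b| * r := by
          simpa [abs_mul, abs_of_nonneg hl, abs_of_nonneg hr] using abs_add_le (a * l) (b * r)
      _ ≤ (|a| + |b|) * (l + r) := by nlinarith [abs_nonneg a, abs_nonneg b]
  have hy' : max (-y) 0 ≤ κ * (l + r) := max_le (by nlinarith) (by positivity)
  have hsplit : 1 - exp (-a * l - b * r - lam * t) =
      (1 - exp (-(lam * t))) + exp (-(lam * t)) * (1 - exp (-y)) := by
    rw [show -a * l - b * r - lam * t = -(lam * t) + -y by ring, exp_add]; ring
  calc |1 - exp (-a * l - b * r - lam * t)|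
      ≤ |1 - exp (-(lam * t))| + exp (-(lam * t)) * |1 - exp (-y)| := by
        rw [hsplit]
        exact (abs_add_le _ _).trans_eq (by rw [abs_mul, abs_exp])
    _ ≤ min 1 (lam * t) + exp (-(lam * t)) * ((|a| + |b|) * (l + r) * exp (κ * (l + r))) := by
        gcongr
        · exact abs_one_sub_exp_neg_le_min hlt
        · exact (abs_one_sub_exp_neg_le y).trans (by gcongr)
    _ = _ := by rw [sub_eq_add_neg, exp_add]; ring

theorem two_mul_sqrt_mul_le_add_div {c lam s t : ℝ} (hc : 0 ≤ c) (hlam : 0 < lam) (ht : 0 < t) :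
    2 * √(c * lam) * s ≤ lam * t + c * s ^ 2 / t := by
  set u := √(c * lam)
  have hu : u ^ 2 = c * lam := sq_sqrt (by positivity)
  rw [← sub_nonneg, show lam * t + c * s ^ 2 / t - 2 * u * s
    = (lam * t - u * s) ^ 2 / (lam * t) by field_simp; linear_combination (-s^2) * hu]
  positivity

theorem exp_sub_mul_exp_neg_div_le {c lam κ δ ε s t : ℝ} (hc : 0 ≤ c) (hlam : 0 < lam)
    (hs : 0 ≤ s) (ht : 0 < t) (hε₀ : 0 ≤ ε) (hε₁ : ε ≤ 1)
    (hδ : κ + δ ≤ (1 - ε) * (2 * √(c * lam))) :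
    exp (κ * s - lam * t) * exp (-(c * s ^ 2) / t) ≤
      exp (-(δ * s)) * exp (-(ε * c * s ^ 2) / t) := by
  rw [← exp_add, ← exp_add, exp_le_exp]
  have hamgm := mul_le_mul_of_nonneg_left (two_mul_sqrt_mul_le_add_div (s := s) hc hlam ht)
    (sub_nonneg.2 hε₁)
  have hrate := mul_le_mul_of_nonneg_right hδ hs
  have hε : ε * c * s ^ 2 / t = ε * (c * s ^ 2 / t) := by ring
  rw [neg_div, neg_div, hε]
  nlinarith [mul_nonneg hε₀ (mul_pos hlam ht).le]

theorem exists_add_le_one_sub_mul_of_lt {κ m : ℝ} (hκ : 0 ≤ κ) (hκm : κ < m) :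
    ∃ ε δ : ℝ, 0 < ε ∧ ε ≤ 1 ∧ 0 < δ ∧ κ + δ ≤ (1 - ε) * m := by
  have hm : 0 < m := hκ.trans_lt hκm
  refine ⟨(m - κ) / (2 * m), (m - κ) / 2, by positivity, ?_, by linarith, le_of_eq ?_⟩
  · rw [div_le_one (by positivity)]; linarith
  · field_simp; ring

theorem lintegral_rpow_mul_exp_neg_div_Ioi {q β : ℝ} (hq : 0 < q) (hβ : 0 < β) :
    ∫⁻ t in Ioi 0, ENNReal.ofReal (t ^ (-q - 1) * exp (-β / t)) =
      ENNReal.ofReal (β ^ (-q) * Gamma q) := by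
  have himage : (fun u : ℝ => u⁻¹) '' Ioi 0 = Ioi 0 := by
    ext x; simp
  have hint : IntegrableOn (fun u : ℝ => u ^ (q - 1) * exp (-(β * u))) (Ioi 0) := by
    simpa using integrableOn_rpow_mul_exp_neg_mul_rpow (p := 1) (by linarith) one_pos hβ
  have hsubst : ∀ u ∈ Ioi (0:ℝ), ENNReal.ofReal |-(u ^ 2)⁻¹| *
      ENNReal.ofReal (u⁻¹ ^ (-q - 1) * exp (-β / u⁻¹)) =
        ENNReal.ofReal (u ^ (q - 1) * exp (-(β * u))) := by
    intro u (hu : 0 < u)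
    rw [← ENNReal.ofReal_mul (abs_nonneg _), abs_neg, abs_of_pos (by positivity),
      inv_rpow hu.le, ← rpow_neg hu.le, div_inv_eq_mul, ← rpow_two, ← rpow_neg hu.le,
      ← mul_assoc, ← rpow_add hu]
    ring_nf
  rw [← himage, lintegral_image_eq_lintegral_abs_deriv_mul measurableSet_Ioi
      (fun u hu => (hasDerivAt_inv (ne_of_gt hu)).hasDerivWithinAt) inv_injective.injOn,
    setLIntegral_congr_fun measurableSet_Ioi hsubst,
    ← ofReal_integral_eq_lintegral_ofReal hint
      ((ae_restrict_iff' measurableSet_Ioi).2 (.of_forall fun u (hu : 0 < u) => by positivity)),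
    integral_rpow_mul_exp_neg_mul_Ioi hq hβ, one_div, inv_rpow hβ.le, rpow_neg hβ.le]

theorem lintegral_rpow_mul_exp_neg_div_mul_min_le {q β lam : ℝ} (hq : 1 < q) (hβ : 0 < β)
    (hlam : 0 ≤ lam) :
    ∫⁻ t in Ioi 0, ENNReal.ofReal (t ^ (-q - 1) * exp (-β / t) * min 1 (lam * t)) ≤
      ENNReal.ofReal (min (β ^ (-q) * Gamma q) (lam * (β ^ (-(q - 1)) * Gamma (q - 1)))) := by
  rw [ENNReal.ofReal_min]
  refine le_min ?_ ?_
  · rw [← lintegral_rpow_mul_exp_neg_div_Ioi (by linarith) hβ]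
    refine setLIntegral_mono' measurableSet_Ioi fun t (ht : 0 < t) => ENNReal.ofReal_le_ofReal ?_
    exact mul_le_of_le_one_right (by positivity) (min_le_left _ _)
  · rw [ENNReal.ofReal_mul hlam, ← lintegral_rpow_mul_exp_neg_div_Ioi (by linarith) hβ,
      ← lintegral_const_mul _ (by fun_prop)]
    refine setLIntegral_mono' measurableSet_Ioi fun t (ht : 0 < t) => ?_
    rw [← ENNReal.ofReal_mul hlam]
    refine ENNReal.ofReal_le_ofReal ?_
    calc t ^ (-q - 1) * exp (-β / t) * min 1 (lam * t)
        ≤ t ^ (-q - 1) * exp (-β / t) * (lam * t) := by gcongr; exact min_le_right _ _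
      _ = lam * (t ^ (-(q - 1) - 1) * exp (-β / t)) := by
        rw [show -(q - 1) - 1 = (-q - 1) + 1 by ring, rpow_add_one ht.ne']; ring

theorem rpow_mul_mul_sq_rpow {s c : ℝ} (hs : 0 < s) (hc : 0 ≤ c) (p q : ℝ) :
    s ^ p * (c * s ^ 2) ^ q = c ^ q * s ^ (p + 2 * q) := by
  rw [mul_rpow hc (sq_nonneg s), ← rpow_natCast, ← rpow_mul hs.le, rpow_add hs]
  push_cast
  ring

section DensityBound

variable {C c lam κ δ ε a b l r : ℝ}

theorem density_mul_abs_one_sub_exp_le (hC : 0 ≤ C) (hc : 0 ≤ c) (hlam : 0 < lam)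
    (hκ : 0 ≤ κ) (ha : -a ≤ κ) (hb : -b ≤ κ) (hε₀ : 0 ≤ ε) (hε₁ : ε ≤ 1)
    (hδ : κ + δ ≤ (1 - ε) * (2 * √(c * lam))) (hl : 0 < l) (hr : 0 < r) {t : ℝ} (ht : 0 < t) :
    C * (l + r) ^ ((1:ℝ)/2) * exp (-(c * (l + r) ^ 2) / t) * t ^ (-(5:ℝ)/2) *
        |1 - exp (-a * l - b * r - lam * t)| ≤
      C * (l + r) ^ ((1:ℝ)/2) *
          (t ^ (-(5:ℝ)/2) * exp (-(c * (l + r) ^ 2) / t) * min 1 (lam * t)) +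
        C * (|a| + |b|) * (l + r) ^ ((3:ℝ)/2) * exp (-(δ * (l + r))) *
          (t ^ (-(5:ℝ)/2) * exp (-(ε * c * (l + r) ^ 2) / t)) := by
  set s := l + r
  have hs : 0 < s := by positivity
  have hs32 : s ^ ((3:ℝ)/2) = s ^ ((1:ℝ)/2) * s := by
    rw [← rpow_add_one hs.ne']; norm_num
  have hexp := exp_sub_mul_exp_neg_div_le hc hlam hs.le ht hε₀ hε₁ hδ
  calc C * s ^ ((1:ℝ)/2) * exp (-(c * s ^ 2) / t) * t ^ (-(5:ℝ)/2) *
        |1 - exp (-a * l - b * r - lam * t)|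
      ≤ C * s ^ ((1:ℝ)/2) * exp (-(c * s ^ 2) / t) * t ^ (-(5:ℝ)/2) *
          (min 1 (lam * t) + (|a| + |b|) * s * exp (κ * s - lam * t)) := by
        gcongr
        exact abs_one_sub_exp_neg_sub_le hκ ha hb hl.le hr.le (by positivity)
    _ = C * s ^ ((1:ℝ)/2) * (t ^ (-(5:ℝ)/2) * exp (-(c * s ^ 2) / t) * min 1 (lam * t)) +
          C * (|a| + |b|) * s ^ ((3:ℝ)/2) * t ^ (-(5:ℝ)/2) *
            (exp (κ * s - lam * t) * exp (-(c * s ^ 2) / t)) := by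
        rw [hs32]; ring
    _ ≤ C * s ^ ((1:ℝ)/2) * (t ^ (-(5:ℝ)/2) * exp (-(c * s ^ 2) / t) * min 1 (lam * t)) +
          C * (|a| + |b|) * s ^ ((3:ℝ)/2) * t ^ (-(5:ℝ)/2) *
            (exp (-(δ * s)) * exp (-(ε * c * s ^ 2) / t)) := by
        gcongr
    _ = _ := by ring

theorem lintegral_density_mul_enorm_le (hC : 0 ≤ C) (hc : 0 < c) (hlam : 0 < lam)
    (hκ : 0 ≤ κ) (ha : -a ≤ κ) (hb : -b ≤ κ) (hε₀ : 0 < ε) (hε₁ : ε ≤ 1)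
    (hδ : κ + δ ≤ (1 - ε) * (2 * √(c * lam))) (hl : 0 < l) (hr : 0 < r) :
    ∫⁻ t in Ioi 0, ENNReal.ofReal (C * (l + r) ^ ((1:ℝ)/2) *
        exp (-(c * (l + r) ^ 2) / t) * t ^ (-(5:ℝ)/2)) * ‖1 - exp (-a * l - b * r - lam * t)‖ₑ ≤
      ENNReal.ofReal (C * (l + r) ^ ((1:ℝ)/2) * min ((c * (l + r) ^ 2) ^ (-(3/2:ℝ)) * Gamma (3/2))
          (lam * ((c * (l + r) ^ 2) ^ (-(1/2:ℝ)) * Gamma (1/2))) +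
        C * (|a| + |b|) * (l + r) ^ ((3:ℝ)/2) * exp (-(δ * (l + r))) *
          ((ε * (c * (l + r) ^ 2)) ^ (-(3/2:ℝ)) * Gamma (3/2))) := by
  set s := l + r
  have hs : 0 < s := by positivity
  have hA : 0 ≤ C * s ^ ((1:ℝ)/2) := by positivity
  have hB : 0 ≤ C * (|a| + |b|) * s ^ ((3:ℝ)/2) * exp (-(δ * s)) := by positivity
  rw [ENNReal.ofReal_add (by positivity) (by positivity), ENNReal.ofReal_mul hA,
    ENNReal.ofReal_mul hB, ← lintegral_rpow_mul_exp_neg_div_Ioi (by norm_num) (by positivity),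
    show (-(3/2:ℝ) - 1) = -(5:ℝ)/2 by norm_num, ← mul_assoc ε]
  calc _ ≤ ∫⁻ t in Ioi 0,
          ENNReal.ofReal (C * s ^ ((1:ℝ)/2)) *
              ENNReal.ofReal (t ^ (-(5:ℝ)/2) * exp (-(c * s ^ 2) / t) * min 1 (lam * t)) +
            ENNReal.ofReal (C * (|a| + |b|) * s ^ ((3:ℝ)/2) * exp (-(δ * s))) *
              ENNReal.ofReal (t ^ (-(5:ℝ)/2) * exp (-(ε * c * s ^ 2) / t)) := by
        refine setLIntegral_mono' measurableSet_Ioi fun t (ht : 0 < t) => ?_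
        rw [enorm_eq_ofReal_abs, ← ENNReal.ofReal_mul (by positivity),
          ← ENNReal.ofReal_mul hA, ← ENNReal.ofReal_mul hB]
        exact (ENNReal.ofReal_le_ofReal (density_mul_abs_one_sub_exp_le hC hc.le hlam hκ ha hb
          hε₀.le hε₁ hδ hl hr ht)).trans ENNReal.ofReal_add_le
    _ = ENNReal.ofReal (C * s ^ ((1:ℝ)/2)) * (∫⁻ t in Ioi 0,
            ENNReal.ofReal (t ^ (-(5:ℝ)/2) * exp (-(c * s ^ 2) / t) * min 1 (lam * t))) +
          ENNReal.ofReal (C * (|a| + |b|) * s ^ ((3:ℝ)/2) * exp (-(δ * s))) * ∫⁻ t in Ioi 0,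
            ENNReal.ofReal (t ^ (-(5:ℝ)/2) * exp (-(ε * c * s ^ 2) / t)) := by
        rw [lintegral_add_left (by fun_prop), lintegral_const_mul _ (by fun_prop),
          lintegral_const_mul _ (by fun_prop)]
    _ ≤ _ := by
        gcongr
        rw [show -(5:ℝ)/2 = -(3/2) - 1 by norm_num]
        exact (lintegral_rpow_mul_exp_neg_div_mul_min_le (by norm_num) (by positivity)
          hlam.le).trans_eq (by norm_num)

theorem exists_lintegral_density_mul_enorm_le (hC : 0 ≤ C) (hc : 0 < c) (hlam : 0 < lam)
    (hκ : 0 ≤ κ) (ha : -a ≤ κ) (hb : -b ≤ κ) (hε₀ : 0 < ε) (hε₁ : ε ≤ 1)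
    (hδ : κ + δ ≤ (1 - ε) * (2 * √(c * lam))) :
    ∃ α β γ : ℝ, 0 ≤ α ∧ 0 ≤ β ∧ ∀ l r : ℝ, 0 < l → 0 < r →
      ∫⁻ t in Ioi 0, ENNReal.ofReal (C * (l + r) ^ ((1:ℝ)/2) *
          exp (-(c * (l + r) ^ 2) / t) * t ^ (-(5:ℝ)/2)) * ‖1 - exp (-a * l - b * r - lam * t)‖ₑ ≤
        ENNReal.ofReal (min (α * (l + r) ^ (-(5:ℝ)/2)) (β * (l + r) ^ (-(1:ℝ)/2)) +
          γ * ((l + r) ^ (-(3:ℝ)/2) * exp (-(δ * (l + r))))) := by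
  refine ⟨C * Gamma (3/2) * c ^ (-(3:ℝ)/2), C * lam * Gamma (1/2) * c ^ (-(1:ℝ)/2),
    C * (|a| + |b|) * Gamma (3/2) * (ε * c) ^ (-(3:ℝ)/2), by positivity, by positivity,
    fun l r hl hr => (lintegral_density_mul_enorm_le hC hc hlam hκ ha hb hε₀ hε₁ hδ hl hr).trans_eq
      (congrArg ENNReal.ofReal ?_)⟩
  set s := l + r
  have hs : 0 < s := by positivity
  have h₁ : s ^ ((1:ℝ)/2) * (c * s ^ 2) ^ (-(3/2:ℝ)) = c ^ (-(3:ℝ)/2) * s ^ (-(5:ℝ)/2) := by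
    rw [rpow_mul_mul_sq_rpow hs hc.le]; norm_num
  have h₂ : s ^ ((1:ℝ)/2) * (c * s ^ 2) ^ (-(1/2:ℝ)) = c ^ (-(1:ℝ)/2) * s ^ (-(1:ℝ)/2) := by
    rw [rpow_mul_mul_sq_rpow hs hc.le]; norm_num
  have h₃ : s ^ ((3:ℝ)/2) * (ε * c * s ^ 2) ^ (-(3/2:ℝ)) =
      (ε * c) ^ (-(3:ℝ)/2) * s ^ (-(3:ℝ)/2) := by
    rw [rpow_mul_mul_sq_rpow hs (by positivity)]; norm_num
  rw [mul_min_of_nonneg _ _ (by positivity), ← mul_assoc ε]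
  congr 1
  · congr 1
    · linear_combination (C * Gamma (3/2)) * h₁
    · linear_combination (C * lam * Gamma (1/2)) * h₂
  · linear_combination (C * (|a| + |b|) * Gamma (3/2) * exp (-(δ * s))) * h₃

end DensityBound

theorem integrableOn_Ioi_min_rpow {α β p q : ℝ} (hα : 0 ≤ α) (hβ : 0 ≤ β) (hp : p < -1)
    (hq : -1 < q) : IntegrableOn (fun s => min (α * s ^ p) (β * s ^ q)) (Ioi 0) := by
  have hmeas : AEStronglyMeasurable (fun s : ℝ => min (α * s ^ p) (β * s ^ q)) :=
    (by fun_prop : Measurable fun s : ℝ => min (α * s ^ p) (β * s ^ q)).aestronglyMeasurable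
  rw [← Ioc_union_Ioi_eq_Ioi zero_le_one]
  refine IntegrableOn.union ?_ ?_
  · refine Integrable.mono' (((intervalIntegrable_iff_integrableOn_Ioc_of_le zero_le_one).1
      (intervalIntegral.intervalIntegrable_rpow' hq)).const_mul β) hmeas.restrict
      ((ae_restrict_iff' measurableSet_Ioc).2 (.of_forall fun s hs => ?_))
    rw [norm_of_nonneg (le_min (by have := hs.1; positivity) (by have := hs.1; positivity))]
    exact min_le_right _ _
  · refine Integrable.mono' ((integrableOn_Ioi_rpow_of_lt hp one_pos).const_mul α) hmeas.restrict
      ((ae_restrict_iff' measurableSet_Ioi).2 (.of_forall fun s (hs : 1 < s) => ?_))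
    rw [norm_of_nonneg (le_min (by positivity) (by positivity))]
    exact min_le_left _ _

theorem lintegral_ofReal_mul_min_rpow_add_lt_top {α β γ δ : ℝ} (hα : 0 ≤ α) (hβ : 0 ≤ β)
    (hδ : 0 < δ) :
    ∫⁻ s in Ioi 0, ENNReal.ofReal s * ENNReal.ofReal (min (α * s ^ (-(5:ℝ)/2))
      (β * s ^ (-(1:ℝ)/2)) + γ * (s ^ (-(3:ℝ)/2) * exp (-(δ * s)))) < ⊤ := by
  have hgamma : IntegrableOn (fun s => s ^ (-(1:ℝ)/2) * exp (-(δ * s))) (Ioi 0) := by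
    simpa using integrableOn_rpow_mul_exp_neg_mul_rpow (by norm_num : -1 < -(1:ℝ)/2) one_pos hδ
  have hint : IntegrableOn (fun s => min (α * s ^ (-(3:ℝ)/2)) (β * s ^ ((1:ℝ)/2)) +
      γ * (s ^ (-(1:ℝ)/2) * exp (-(δ * s)))) (Ioi 0) :=
    (integrableOn_Ioi_min_rpow hα hβ (by norm_num) (by norm_num)).add (hgamma.const_mul γ)
  refine lt_of_eq_of_lt (setLIntegral_congr_fun measurableSet_Ioi fun s (hs : 0 < s) => ?_)
    hint.lintegral_lt_top
  rw [← ENNReal.ofReal_mul hs.le, mul_add, mul_min_of_nonneg _ _ hs.le, mul_left_comm s α,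
    mul_left_comm s β, mul_left_comm s γ, ← mul_assoc s, ← rpow_one_add' hs.le (by norm_num),
    ← rpow_one_add' hs.le (by norm_num), ← rpow_one_add' hs.le (by norm_num)]
  norm_num

theorem lintegral_Ioi_lintegral_Ioi_comp_add {G : ℝ → ℝ≥0∞} (hG : Measurable G) :
    ∫⁻ l in Ioi 0, ∫⁻ r in Ioi 0, G (l + r) = ∫⁻ s in Ioi 0, ENNReal.ofReal s * G s := by
  have hshift : ∀ l ∈ Ioi (0:ℝ),
      ∫⁻ r in Ioi 0, G (l + r) = ∫⁻ s in Ioi 0, (Iio s).indicator (fun _ => G s) l := by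
    intro l (hl : 0 < l)
    have hpre : (fun r : ℝ => l + r) ⁻¹' Ioi l = Ioi 0 := by ext r; simp
    calc ∫⁻ r in Ioi 0, G (l + r) = ∫⁻ s in Ioi l, G s := by
          rw [← hpre, (measurePreserving_add_left volume l).setLIntegral_comp_preimage_emb
            (MeasurableEquiv.addLeft l).measurableEmbedding G (Ioi l)]
      _ = _ := by
          rw [← lintegral_indicator measurableSet_Ioi, ← lintegral_indicator measurableSet_Ioi]
          congr 1 with s
          by_cases hs : l < s
          · simp [indicator, hs, hl.trans hs]
          · simp [indicator, hs]
  rw [setLIntegral_congr_fun measurableSet_Ioi hshift, lintegral_lintegral_swap]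
  · refine setLIntegral_congr_fun measurableSet_Ioi fun s (hs : 0 < s) => ?_
    rw [lintegral_indicator_const measurableSet_Iio, Measure.restrict_apply measurableSet_Iio,
      Iio_inter_Ioi, Real.volume_Ioo, sub_zero, mul_comm]
  · exact ((hG.comp measurable_snd).indicator
      (measurableSet_lt measurable_fst measurable_snd)).aemeasurable

theorem setLIntegral_positiveOctant_eq_iterated {F : ℝ × ℝ × ℝ → ℝ≥0∞} (hF : Measurable F) :
    ∫⁻ p in {p : ℝ × ℝ × ℝ | 0 < p.1 ∧ 0 < p.2.1 ∧ 0 < p.2.2}, F p =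
      ∫⁻ l in Ioi 0, ∫⁻ r in Ioi 0, ∫⁻ t in Ioi 0, F (l, r, t) := by
  have hset : {p : ℝ × ℝ × ℝ | 0 < p.1 ∧ 0 < p.2.1 ∧ 0 < p.2.2} =
      Ioi (0:ℝ) ×ˢ Ioi (0:ℝ) ×ˢ Ioi (0:ℝ) := by
    ext; simp
  rw [hset, Measure.volume_eq_prod, ← Measure.prod_restrict, Measure.volume_eq_prod,
    ← Measure.prod_restrict, lintegral_prod _ hF.aemeasurable]
  refine lintegral_congr fun l => lintegral_prod _ ?_
  exact (hF.comp measurable_prodMk_left).aemeasurable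

/-- Integrability of `(l,r,t) ↦ 1 − e^{−al−br−λt}` with respect to `μ` whenever
`a, b > −2√(cλ)`, needed for the Lévy–Khintchine uniqueness argument. -/
theorem stmt_18 (lam : ℝ) (hlam : 0 < lam) (c : ℝ) (hc : c = (2 * Real.sqrt 3)⁻¹)
    (a b : ℝ) (ha : -(2 * Real.sqrt (c * lam)) < a) (hb : -(2 * Real.sqrt (c * lam)) < b) :
    MeasureTheory.Integrable
      (fun p : ℝ × ℝ × ℝ => 1 - Real.exp (-a * p.1 - b * p.2.1 - lam * p.2.2)) μ := by
  have hc₀ : 0 < c := by rw [hc]; positivity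
  set κ := max (max (-a) (-b)) 0
  obtain ⟨ε, δ, hε₀, hε₁, hδ₀, hδ⟩ := exists_add_le_one_sub_mul_of_lt (le_max_right _ _)
    (max_lt (max_lt (by linarith) (by linarith)) (by positivity) : κ < 2 * √(c * lam))
  obtain ⟨α, β, γ, hα, hβ, hbound⟩ := exists_lintegral_density_mul_enorm_le
    (C := (3:ℝ) ^ (-(5:ℝ)/8) / (8 * √(2 * π))) (a := a) (b := b) (by positivity) hc₀ hlam
    (le_max_right _ _) (le_trans (le_max_left _ _) (le_max_left _ _))
    (le_trans (le_max_right _ _) (le_max_left _ _)) hε₀ hε₁ hδ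
  have hexp : ∀ x t : ℝ, -x ^ 2 / (2 * √3 * t) = -(c * x ^ 2) / t := by
    intro x t; rw [hc]; field_simp
  refine ⟨(by fun_prop : Continuous _).aestronglyMeasurable, ?_⟩
  rw [HasFiniteIntegral, μ, lintegral_withDensity_eq_lintegral_mul _ (by fun_prop) (by fun_prop),
    setLIntegral_positiveOctant_eq_iterated (by fun_prop)]
  simp only [Pi.mul_apply, hexp]
  set G : ℝ → ℝ := fun s => min (α * s ^ (-(5:ℝ)/2)) (β * s ^ (-(1:ℝ)/2)) +
    γ * (s ^ (-(3:ℝ)/2) * exp (-(δ * s)))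
  calc _ ≤ ∫⁻ l in Ioi 0, ∫⁻ r in Ioi 0, ENNReal.ofReal (G (l + r)) :=
        setLIntegral_mono' measurableSet_Ioi fun l hl =>
          setLIntegral_mono' measurableSet_Ioi fun r hr => hbound l r hl hr
    _ = ∫⁻ s in Ioi 0, ENNReal.ofReal s * ENNReal.ofReal (G s) :=
        lintegral_Ioi_lintegral_Ioi_comp_add (ENNReal.measurable_ofReal.comp (by fun_prop))
    _ < ⊤ := lintegral_ofReal_mul_min_rpow_add_lt_top hα hβ hδ₀
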